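/- arXiv:cs/0609015 — 4 statements merged into one kernel-verified Lean document; each statement's English description precedes it below -/
import Mathlib

section
/- Let L be a regular tree language and A_can its canonical bottom-up automaton. Then for every term t ∈ T(F): t⁻¹L = ⋃ { t_q⁻¹L : q a state of A_can with t →*_{A_can} q }. -/
/-- Terms over a ranked alphabet `F` with arity function `arity`. -/
inductive Term (F : Type) (arity : F → ℕ) : Type where
  | node (f : F) (children : Fin (arity f) → Term F arity) : Term F arity

/-- Contexts: terms with exactly one occurrence of the hole `◇`. -/
inductive Ctx (F : Type) (arity : F → ℕ) : Type where
  | hole : Ctx F arity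
  | node (f : F) (i : Fin (arity f)) (c : Ctx F arity)
      (sib : (j : Fin (arity f)) → j ≠ i → Term F arity) : Ctx F arity

/-- `c.fill t` replaces the hole of `c` by the term `t`. -/
def Ctx.fill {F : Type} {arity : F → ℕ} : Ctx F arity → Term F arity → Term F arity
  | .hole, t => t
  | .node f i c sib, t => .node f (fun j => if h : j = i then c.fill t else sib j h)

/-- Bottom-up residual of the tree language `L` w.r.t. the term `t`:
the set of contexts `c` with `c[t] ∈ L`. -/
def bres {F : Type} {arity : F → ℕ} (L : Set (Term F arity)) (t : Term F arity) :
    Set (Ctx F arity) := {c | c.fill t ∈ L}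

/-- Bottom-up finite tree automaton with state type `Q`:
final states and a set of rules `f(q₁,…,qₙ) → q`. -/
structure BUTA (F : Type) (arity : F → ℕ) (Q : Type) where
  final : Set Q
  rules : (f : F) → (Fin (arity f) → Q) → Q → Prop

/-- Reachability `t →*_A q`. -/
inductive BUTA.Reach {F Q : Type} {arity : F → ℕ} (A : BUTA F arity Q) :
    Term F arity → Q → Prop
  | node {f : F} {ch : Fin (arity f) → Term F arity} {qs : Fin (arity f) → Q} {q : Q} :
      A.rules f qs q → (∀ i, A.Reach (ch i) (qs i)) → A.Reach (.node f ch) q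

/-- Language recognized by a bottom-up tree automaton. -/
def BUTA.lang {F Q : Type} {arity : F → ℕ} (A : BUTA F arity Q) : Set (Term F arity) :=
  {t | ∃ q ∈ A.final, A.Reach t q}

/-- `A.CReach q0 c q` : putting state `q0` in the hole of `c`, the automaton can reach `q`
at the root (extending `→*_A` to terms over `F ∪ Q` by `q →*_A q`). -/
inductive BUTA.CReach {F Q : Type} {arity : F → ℕ} (A : BUTA F arity Q) (q0 : Q) :
    Ctx F arity → Q → Prop
  | hole : A.CReach q0 .hole q0
  | node {f : F} {i : Fin (arity f)} {c : Ctx F arity}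
      {sib : (j : Fin (arity f)) → j ≠ i → Term F arity}
      {qs : Fin (arity f) → Q} {q : Q} :
      A.rules f qs q → A.CReach q0 c (qs i) →
      (∀ j (h : j ≠ i), A.Reach (sib j h) (qs j)) →
      A.CReach q0 (.node f i c sib) q

/-- State language `C_q`: the set of contexts accepted by the state `q`. -/
def BUTA.stateLang {F Q : Type} {arity : F → ℕ} (A : BUTA F arity Q) (q : Q) :
    Set (Ctx F arity) := {c | ∃ qf ∈ A.final, A.CReach q c qf}

/-- A bottom-up automaton is deterministic iff no two rules share a left-hand side. -/
def BUTA.Deterministic {F Q : Type} {arity : F → ℕ} (A : BUTA F arity Q) : Prop :=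
  ∀ (f : F) (qs : Fin (arity f) → Q) (q q' : Q), A.rules f qs q → A.rules f qs q' → q = q'

/-- Bottom-up residual finite tree automaton: each state language is a residual of `L(A)`. -/
def IsRFTA {F Q : Type} {arity : F → ℕ} (A : BUTA F arity Q) : Prop :=
  ∀ q : Q, ∃ t : Term F arity, A.stateLang q = bres A.lang t

/-- A bottom-up residual is composite iff it is the union of the bottom-up residuals
of `L` that it strictly contains. -/
def IsCompositeRes {F : Type} {arity : F → ℕ} (L : Set (Term F arity))
    (t : Term F arity) : Prop :=
  bres L t = ⋃ t' ∈ {t' : Term F arity | bres L t' ⊂ bres L t}, bres L t'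

/-- A bottom-up residual is prime iff it is not composite. -/
def IsPrimeRes {F : Type} {arity : F → ℕ} (L : Set (Term F arity))
    (t : Term F arity) : Prop := ¬ IsCompositeRes L t

/-- The canonical bottom-up automaton of `L`, given a family `tq` of representative terms
(one per prime bottom-up residual of `L`): final states are the `q` with `◇ ∈ t_q⁻¹L`,
and the rules are the `f(q₁,…,qₙ) → q` with `t_q⁻¹L ⊆ f(t_{q₁},…,t_{qₙ})⁻¹L`. -/
def canonBU {F : Type} {arity : F → ℕ} (L : Set (Term F arity)) {Q : Type}
    (tq : Q → Term F arity) : BUTA F arity Q where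
  final := {q | Ctx.hole ∈ bres L (tq q)}
  rules f qs q := bres L (tq q) ⊆ bres L (.node f (fun i => tq (qs i)))

/-! `⊇`: every rule `f(q₁,…,qₙ) → q` of `A_can` says `t_q⁻¹L ⊆ f(t_{q₁},…,t_{qₙ})⁻¹L`, and
residuals are monotone in each argument, so `t →* q` gives `t_q⁻¹L ⊆ t⁻¹L`.

`⊆`, by induction on `t = f(t₁,…,tₙ)`: for `c ∈ t⁻¹L`, moving the hole of `c` down to the
`i`-th child turns `c` into a context in `tᵢ⁻¹L`, hence (induction hypothesis) in some `t_{qᵢ}⁻¹L`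
with `tᵢ →* qᵢ`; so `tᵢ` may be replaced by `t_{qᵢ}` while keeping `c` in the residual. Once
all children are replaced, `c ∈ f(t_{q₁},…,t_{qₙ})⁻¹L`. Since `L` is regular it has finitely many
residuals, so a minimal residual containing `c` inside this one exists; it is prime, hence equal
to some `t_q⁻¹L`, which yields a rule `f(q₁,…,qₙ) → q` of `A_can`. -/

theorem Function.exists_of_update_step {ι α : Type*} [Fintype ι] [DecidableEq ι]
    {g : (ι → α) → Prop} {P : ι → α → Prop} {u : ι → α}
    (hstep : ∀ x i, x i = u i → g x → ∃ a, P i a ∧ g (Function.update x i a)) (hu : g u) :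
    ∃ v, (∀ i, P i (v i)) ∧ g v := by
  suffices ∀ s : Finset ι, ∃ v, (∀ i ∈ s, P i (v i)) ∧ (∀ i ∉ s, v i = u i) ∧ g v by
    obtain ⟨v, hP, -, hg⟩ := this Finset.univ
    exact ⟨v, fun i => hP i (Finset.mem_univ i), hg⟩
  intro s
  induction s using Finset.induction_on with
  | empty => exact ⟨u, by simp, fun _ _ => rfl, hu⟩
  | insert i s hi ih =>
    obtain ⟨v, hP, hu', hg⟩ := ih
    obtain ⟨a, ha, hga⟩ := hstep v i (hu' i hi) hg
    refine ⟨Function.update v i a, ?_, ?_, hga⟩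
    · intro j hj
      rcases eq_or_ne j i with rfl | hji
      · simpa using ha
      · simpa [hji] using hP j (Finset.mem_of_mem_insert_of_ne hj hji)
    · intro j hj
      rw [Finset.mem_insert, not_or] at hj
      rw [Function.update_of_ne hj.1, hu' j hj.2]

theorem Function.of_update_step {ι α : Type*} [Fintype ι] [DecidableEq ι]
    {g : (ι → α) → Prop} {r : α → α → Prop} {u v : ι → α}
    (hstep : ∀ x i, r (x i) (v i) → g x → g (Function.update x i (v i)))
    (huv : ∀ i, r (u i) (v i)) (hu : g u) : g v := by
  obtain ⟨w, hw, hgw⟩ := Function.exists_of_update_step (P := fun i a => a = v i)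
    (fun x i hx hgx => ⟨v i, rfl, hstep x i (hx ▸ huv i) hgx⟩) hu
  rwa [show w = v from funext hw] at hgw

section Residuals

variable {F : Type} {arity : F → ℕ}

/-- The context `c[f(s₁,…,◇,…,sₙ)]`, with the hole at position `i`. -/
def Ctx.appendNode : Ctx F arity → (f : F) → (i : Fin (arity f)) →
    ((j : Fin (arity f)) → j ≠ i → Term F arity) → Ctx F arity
  | .hole, f, i, sib => .node f i .hole sib
  | .node g k c s, f, i, sib => .node g k (c.appendNode f i sib) s

theorem Ctx.fill_appendNode (c : Ctx F arity) (f : F) (i : Fin (arity f))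
    (sib : (j : Fin (arity f)) → j ≠ i → Term F arity) (t : Term F arity) :
    (c.appendNode f i sib).fill t
      = c.fill (.node f fun j => if h : j = i then t else sib j h) := by
  induction c with
  | hole => rfl
  | node g k c s ih => simp only [Ctx.appendNode, Ctx.fill, ih]

theorem mem_bres_node_update_iff (L : Set (Term F arity)) (f : F)
    (ch : Fin (arity f) → Term F arity) (i : Fin (arity f)) (s : Term F arity)
    (c : Ctx F arity) :
    c ∈ bres L (.node f (Function.update ch i s)) ↔
      c.appendNode f i (fun j _ => ch j) ∈ bres L s := by
  have hch : (fun j => if h : j = i then s else ch j) = Function.update ch i s := by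
    funext j
    by_cases h : j = i <;> simp [h]
  simp only [bres, Set.mem_ofPred_eq, Ctx.fill_appendNode, hch]

theorem bres_node_mono (L : Set (Term F arity)) (f : F) {u v : Fin (arity f) → Term F arity}
    (h : ∀ i, bres L (u i) ⊆ bres L (v i)) :
    bres L (.node f u) ⊆ bres L (.node f v) := by
  intro c hc
  refine Function.of_update_step (g := fun x => c ∈ bres L (.node f x))
    (r := fun a b => bres L a ⊆ bres L b) ?_ h hc
  intro x i hxv hcx
  rw [mem_bres_node_update_iff]
  rw [← Function.update_eq_self i x, mem_bres_node_update_iff] at hcx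
  exact hxv hcx

theorem BUTA.reach_fill_iff {Q : Type} (A : BUTA F arity Q) (c : Ctx F arity)
    (t : Term F arity) (q : Q) :
    A.Reach (c.fill t) q ↔ ∃ p, A.Reach t p ∧ A.CReach p c q := by
  induction c generalizing q with
  | hole => exact ⟨fun h => ⟨q, h, .hole⟩, fun ⟨_, hp, .hole⟩ => hp⟩
  | node f i c sib ih =>
    constructor
    · rintro (⟨hrule, hch⟩ : A.Reach (.node f _) q)
      obtain ⟨p, hp, hcp⟩ := (ih _).1 (by simpa using hch i)
      exact ⟨p, hp, .node hrule hcp fun j hj => by simpa [hj] using hch j⟩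
    · rintro ⟨p, hp, hcp⟩
      obtain _ | ⟨hrule, hcp, hsib⟩ := hcp
      refine .node hrule fun j => ?_
      by_cases hj : j = i
      · subst hj
        simpa using (ih _).2 ⟨p, hp, hcp⟩
      · simpa [hj] using hsib j hj

theorem BUTA.bres_lang {Q : Type} (A : BUTA F arity Q) (t : Term F arity) :
    bres A.lang t = ⋃ p ∈ {p | A.Reach t p}, A.stateLang p := by
  ext c
  simp only [bres, BUTA.lang, BUTA.stateLang, BUTA.reach_fill_iff, Set.mem_ofPred_eq,
    Set.mem_iUnion, exists_prop]
  tauto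

theorem BUTA.finite_range_bres_lang {Q : Type} [Finite Q] (A : BUTA F arity Q) :
    (Set.range (bres A.lang)).Finite := by
  refine (Set.finite_range fun X : Set Q => ⋃ p ∈ X, A.stateLang p).subset ?_
  rintro _ ⟨t, rfl⟩
  exact ⟨_, (A.bres_lang t).symm⟩

/-- A residual that is minimal among the residuals containing `c` is prime. -/
theorem exists_isPrimeRes_mem_bres_subset {L : Set (Term F arity)}
    (hfin : (Set.range (bres L)).Finite) {c : Ctx F arity} {s : Term F arity}
    (hc : c ∈ bres L s) :
    ∃ t, IsPrimeRes L t ∧ c ∈ bres L t ∧ bres L t ⊆ bres L s := by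
  obtain ⟨_, hle, ⟨⟨t, rfl⟩, hct⟩, hmin⟩ :=
    (hfin.inter_of_left {S | c ∈ S}).exists_le_minimal (a := bres L s) ⟨⟨s, rfl⟩, hc⟩
  refine ⟨t, fun hcomp => ?_, hct, hle⟩
  rw [IsCompositeRes, Set.ext_iff] at hcomp
  obtain ⟨t', hlt, hct'⟩ := by simpa using (hcomp c).1 hct
  exact hlt.not_ge (hmin ⟨⟨t', rfl⟩, hct'⟩ hlt.le)

theorem canonBU_reach_bres_subset (L : Set (Term F arity)) {Q : Type}
    (tq : Q → Term F arity) {t : Term F arity} {q : Q} (h : (canonBU L tq).Reach t q) :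
    bres L (tq q) ⊆ bres L t := by
  induction h with
  | node hrule _ ih => exact hrule.trans (bres_node_mono L _ ih)

theorem exists_canonBU_reach_of_mem_bres {L : Set (Term F arity)}
    (hfin : (Set.range (bres L)).Finite) {Q : Type} {tq : Q → Term F arity}
    (hsurj : ∀ t : Term F arity, IsPrimeRes L t → ∃ q, bres L (tq q) = bres L t)
    (t : Term F arity) {c : Ctx F arity} (hc : c ∈ bres L t) :
    ∃ q, (canonBU L tq).Reach t q ∧ c ∈ bres L (tq q) := by
  induction t generalizing c with
  | node f ch ih =>
    have hstep : ∀ x i, x i = ch i → c ∈ bres L (.node f x) →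
        ∃ a, (∃ q, (canonBU L tq).Reach (ch i) q ∧ a = tq q) ∧
          c ∈ bres L (.node f (Function.update x i a)) := by
      intro x i hxi hcx
      rw [← Function.update_eq_self i x, mem_bres_node_update_iff, hxi] at hcx
      obtain ⟨q, hreach, hq⟩ := ih i hcx
      exact ⟨tq q, ⟨q, hreach, rfl⟩, (mem_bres_node_update_iff ..).2 hq⟩
    obtain ⟨v, hv, hcv⟩ := Function.exists_of_update_step hstep hc
    choose qs hreach hqs using hv
    obtain ⟨t', hprime, hct', hsub⟩ := exists_isPrimeRes_mem_bres_subset hfin hcv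
    obtain ⟨q, hq⟩ := hsurj t' hprime
    rw [funext hqs] at hsub
    exact ⟨q, .node (hq.trans_subset hsub) hreach, hq ▸ hct'⟩

end Residuals

theorem canonBU_residual_eq_iUnion_general {F Q : Type} {arity : F → ℕ}
    (L : Set (Term F arity))
    (hreg : ∃ (Q' : Type) (_ : Fintype Q') (A : BUTA F arity Q'), A.lang = L)
    (tq : Q → Term F arity)
    (hsurj : ∀ t : Term F arity, IsPrimeRes L t → ∃ q, bres L (tq q) = bres L t)
    (t : Term F arity) :
    bres L t = ⋃ q ∈ {q : Q | (canonBU L tq).Reach t q}, bres L (tq q) := by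
  obtain ⟨Q', _, A, rfl⟩ := hreg
  have hfin := A.finite_range_bres_lang
  refine subset_antisymm (fun c hc => ?_) (Set.iUnion₂_subset fun q hq => ?_)
  · obtain ⟨q, hreach, hcq⟩ := exists_canonBU_reach_of_mem_bres hfin hsurj t hc
    exact Set.mem_biUnion hreach hcq
  · exact canonBU_reach_bres_subset _ tq hq

/-- For a regular tree language `L` and its canonical bottom-up automaton
`A_can`, for every term `t`: `t⁻¹L = ⋃ { t_q⁻¹L : q with t →*_{A_can} q }`. -/
theorem canonBU_residual_eq_iUnion {F Q : Type} [Fintype F] [Fintype Q] {arity : F → ℕ}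
    (_hconst : ∃ a : F, arity a = 0) (L : Set (Term F arity))
    (hreg : ∃ (Q' : Type) (_ : Fintype Q') (A : BUTA F arity Q'), A.lang = L)
    (tq : Q → Term F arity)
    (hprime : ∀ q, IsPrimeRes L (tq q))
    (hinj : ∀ q q', bres L (tq q) = bres L (tq q') → q = q')
    (hsurj : ∀ t : Term F arity, IsPrimeRes L t → ∃ q, bres L (tq q) = bres L t)
    (t : Term F arity) :
    bres L t = ⋃ q ∈ {q : Q | (canonBU L tq).Reach t q}, bres L (tq q) :=
  canonBU_residual_eq_iUnion_general L hreg tq hsurj t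
end

section
/- Let L be a regular tree language and A_can its canonical bottom-up automaton. Then L(A_can) = L. -/
section Aux

variable {F : Type} {arity : F → ℕ}

/-- Composition of contexts: plug `d` into the hole of `c`. -/
def Ctx.comp : Ctx F arity → Ctx F arity → Ctx F arity
  | .hole, d => d
  | .node f i c sib, d => .node f i (c.comp d) sib

lemma Ctx.fill_comp (c d : Ctx F arity) (t : Term F arity) :
    (c.comp d).fill t = c.fill (d.fill t) := by
  induction c with
  | hole => rfl
  | node f i c sib ih => simp [Ctx.comp, Ctx.fill, ih]

/-- Child-by-child substitution lemma. -/
lemma stepwise (L : Set (Term F arity)) (f : F) (ts : Fin (arity f) → Term F arity)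
    (R : Fin (arity f) → Term F arity → Prop)
    (h : ∀ (i : Fin (arity f)) (c' : Ctx F arity),
      c'.fill (ts i) ∈ L → ∃ s, R i s ∧ c'.fill s ∈ L)
    (c : Ctx F arity) (hc : c.fill (.node f ts) ∈ L) :
    ∃ ts' : Fin (arity f) → Term F arity,
      (∀ i, R i (ts' i)) ∧ c.fill (.node f ts') ∈ L := by
  suffices h' : ∀ k : ℕ, ∃ ts' : Fin (arity f) → Term F arity,
      (∀ j : Fin (arity f), ¬ (j : ℕ) < k → ts' j = ts j) ∧
      (∀ j : Fin (arity f), (j : ℕ) < k → R j (ts' j)) ∧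
      c.fill (.node f ts') ∈ L by
    obtain ⟨ts', _, h2, h3⟩ := h' (arity f)
    exact ⟨ts', fun j => h2 j j.isLt, h3⟩
  intro k
  induction k with
  | zero => exact ⟨ts, fun _ _ => rfl, fun j hj => absurd hj (by omega), hc⟩
  | succ k ih =>
    obtain ⟨ts', h1, h2, h3⟩ := ih
    by_cases hk : k < arity f
    · set i : Fin (arity f) := ⟨k, hk⟩ with hi
      have e1 : ∀ s : Term F arity,
          (c.comp (.node f i .hole (fun j _ => ts' j))).fill s
            = c.fill (.node f (fun j => if j = i then s else ts' j)) := by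
        intro s
        rw [Ctx.fill_comp]
        show c.fill (.node f _) = _
        congr 2
      have hti : ts' i = ts i := h1 i (by simp [hi])
      have hfill : (c.comp (.node f i .hole (fun j _ => ts' j))).fill (ts i) ∈ L := by
        rw [e1]
        have : (fun j => if j = i then ts i else ts' j) = ts' := by
          funext j
          by_cases hj : j = i <;> simp [hj, hti]
        rwa [this]
      obtain ⟨s, hR, hs⟩ := h i _ hfill
      rw [e1] at hs
      refine ⟨fun j => if j = i then s else ts' j, ?_, ?_, hs⟩
      · intro j hj
        have hji : j ≠ i := by
          intro hji; apply hj; rw [hji]; simp [hi]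
        simp only [if_neg hji]
        exact h1 j (by omega)
      · intro j hj
        by_cases hji : j = i
        · simpa [hji] using hR
        · have : (j : ℕ) < k := by
            have : (j : ℕ) ≠ k := fun hh => hji (Fin.ext (by simp [hi, hh]))
            omega
          simpa [if_neg hji] using h2 j this
    · refine ⟨ts', fun j hj => h1 j (by omega), fun j hj => h2 j ?_, h3⟩
      have := j.isLt; omega

lemma bres_mono (L : Set (Term F arity)) (f : F)
    (ts ts' : Fin (arity f) → Term F arity)
    (h : ∀ i, bres L (ts i) ⊆ bres L (ts' i)) :
    bres L (.node f ts) ⊆ bres L (.node f ts') := by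
  intro c hc
  obtain ⟨ts'', h1, h2⟩ := stepwise L f ts (fun i s => s = ts' i)
    (fun i c' hc' => ⟨ts' i, rfl, h i hc'⟩) c hc
  have : ts'' = ts' := funext h1
  rwa [this] at h2

/-- Soundness of the canonical automaton. -/
lemma reach_sound {Q : Type} (L : Set (Term F arity)) (tq : Q → Term F arity)
    {t : Term F arity} {q : Q} (h : (canonBU L tq).Reach t q) :
    bres L (tq q) ⊆ bres L t := by
  induction h with
  | @node f ch qs q hrule hch ih =>
    exact hrule.trans (bres_mono L f _ _ ih)

/-- Decomposition of reachability along a context. -/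
lemma reach_fill {Q' : Type} {A : BUTA F arity Q'} (c : Ctx F arity)
    (t : Term F arity) (q : Q') :
    A.Reach (c.fill t) q ↔ ∃ q0, A.Reach t q0 ∧ A.CReach q0 c q := by
  constructor
  · intro h
    induction c generalizing q with
    | hole => exact ⟨q, h, .hole⟩
    | node f i c sib ih =>
      cases h with
      | @node _ _ qs _ hrule hch =>
        obtain ⟨q0, ht, hcr⟩ := ih (qs i) (by have := hch i; simpa using this)
        exact ⟨q0, ht, .node hrule hcr (fun j hj => by have := hch j; simpa [hj] using this)⟩
  · rintro ⟨q0, ht, hcr⟩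
    induction hcr with
    | hole => exact ht
    | @node f i c sib qs q hrule hcr' hsib ih =>
      refine .node hrule (fun j => ?_)
      by_cases hj : j = i
      · subst hj; simpa using ih
      · simpa [hj] using hsib j hj

/-- The residual determined by a set of states. -/
def resOf {Q' : Type} (A : BUTA F arity Q') (s : Set Q') : Set (Ctx F arity) :=
  {c | ∃ qf ∈ A.final, ∃ q0 ∈ s, A.CReach q0 c qf}

lemma bres_eq_resOf {Q' : Type} (A : BUTA F arity Q') (t : Term F arity) :
    bres A.lang t = resOf A {q0 | A.Reach t q0} := by
  ext c
  simp only [bres, BUTA.lang, resOf, Set.mem_setOf_eq, reach_fill]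

lemma finite_bres {Q' : Type} [Fintype Q'] (A : BUTA F arity Q') :
    (Set.range (fun t => bres A.lang t)).Finite := by
  have h : Set.range (fun t => bres A.lang t) ⊆ Set.range (resOf A) := by
    rintro _ ⟨t, rfl⟩
    exact ⟨_, (bres_eq_resOf A t).symm⟩
  exact (Set.finite_range _).subset h

/-- Every residual is a union of prime residuals it contains. -/
lemma prime_cover (L : Set (Term F arity))
    (hfin : (Set.range (fun t => bres L t)).Finite) :
    ∀ t : Term F arity, ∀ c ∈ bres L t,
      ∃ t', IsPrimeRes L t' ∧ bres L t' ⊆ bres L t ∧ c ∈ bres L t' := by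
  have hm : ∀ {t t' : Term F arity}, bres L t' ⊂ bres L t →
      (Set.range (fun s => bres L s) ∩ {x | x ⊆ bres L t'}).ncard
        < (Set.range (fun s => bres L s) ∩ {x | x ⊆ bres L t}).ncard := by
    intro t t' hss
    apply Set.ncard_lt_ncard
    · constructor
      · exact Set.inter_subset_inter_right _ (fun x hx => hx.trans hss.le)
      · intro hsub
        have : bres L t ∈ Set.range (fun s => bres L s) ∩ {x | x ⊆ bres L t} :=
          Set.mem_inter ⟨t, rfl⟩ (Set.mem_setOf_eq ▸ subset_rfl)
        exact hss.not_subset (hsub this).2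
    · exact hfin.inter_of_left _
  suffices h : ∀ n : ℕ, ∀ t : Term F arity,
      (Set.range (fun s => bres L s) ∩ {x | x ⊆ bres L t}).ncard ≤ n →
      ∀ c ∈ bres L t,
        ∃ t', IsPrimeRes L t' ∧ bres L t' ⊆ bres L t ∧ c ∈ bres L t' by
    intro t; exact h _ t le_rfl
  intro n
  induction n with
  | zero =>
    intro t hn c hc
    by_cases hp : IsPrimeRes L t
    · exact ⟨t, hp, subset_rfl, hc⟩
    · exfalso
      rw [IsPrimeRes, not_not] at hp
      rw [hp] at hc
      simp only [Set.mem_iUnion, Set.mem_setOf_eq] at hc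
      obtain ⟨t'', hss, _⟩ := hc
      exact absurd (hm hss) (by omega)
  | succ n ih =>
    intro t hn c hc
    by_cases hp : IsPrimeRes L t
    · exact ⟨t, hp, subset_rfl, hc⟩
    · rw [IsPrimeRes, not_not] at hp
      rw [hp] at hc
      simp only [Set.mem_iUnion, Set.mem_setOf_eq] at hc
      obtain ⟨t'', hss, hc''⟩ := hc
      obtain ⟨t', h1, h2, h3⟩ := ih t'' (by have := hm hss; omega) c hc''
      exact ⟨t', h1, h2.trans hss.le, h3⟩

/-- Completeness of the canonical automaton. -/
lemma reach_complete {Q : Type} (L : Set (Term F arity))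
    (hfin : (Set.range (fun t => bres L t)).Finite) (tq : Q → Term F arity)
    (hsurj : ∀ t : Term F arity, IsPrimeRes L t → ∃ q, bres L (tq q) = bres L t) :
    ∀ t : Term F arity, ∀ c ∈ bres L t,
      ∃ q, (canonBU L tq).Reach t q ∧ c ∈ bres L (tq q) := by
  intro t
  induction t with
  | node f ch ih =>
    intro c hc
    obtain ⟨ts', hR, hL⟩ := stepwise L f ch
      (fun i s => ∃ q, (canonBU L tq).Reach (ch i) q ∧ s = tq q)
      (fun i c' hc' => by
        obtain ⟨q, h1, h2⟩ := ih i c' hc'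
        exact ⟨tq q, ⟨q, h1, rfl⟩, h2⟩) c hc
    choose qs hreach hts using hR
    have hts' : ts' = fun i => tq (qs i) := funext hts
    rw [hts'] at hL
    obtain ⟨t', hp, hsub, hct'⟩ :=
      prime_cover L hfin (.node f (fun i => tq (qs i))) c hL
    obtain ⟨q, hq⟩ := hsurj t' hp
    refine ⟨q, .node (qs := qs) ?_ hreach, by rw [hq]; exact hct'⟩
    show bres L (tq q) ⊆ bres L (.node f (fun i => tq (qs i)))
    rw [hq]
    exact hsub

end Aux

/-- For a regular tree language `L` and its canonical bottom-up automaton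
`A_can`, we have `L(A_can) = L`. -/
theorem canonBU_lang_eq {F Q : Type} [Fintype F] [Fintype Q] {arity : F → ℕ}
    (_hconst : ∃ a : F, arity a = 0) (L : Set (Term F arity))
    (hreg : ∃ (Q' : Type) (_ : Fintype Q') (A : BUTA F arity Q'), A.lang = L)
    (tq : Q → Term F arity)
    (hprime : ∀ q, IsPrimeRes L (tq q))
    (hinj : ∀ q q', bres L (tq q) = bres L (tq q') → q = q')
    (hsurj : ∀ t : Term F arity, IsPrimeRes L t → ∃ q, bres L (tq q) = bres L t) :
    (canonBU L tq).lang = L := by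
  obtain ⟨Q', _, A, hA⟩ := hreg
  have hfin : (Set.range (fun t => bres L t)).Finite := by
    rw [← hA]; exact finite_bres A
  ext t
  constructor
  · rintro ⟨q, hqf, hreach⟩
    exact reach_sound L tq hreach hqf
  · intro ht
    have hc : Ctx.hole ∈ bres L t := ht
    obtain ⟨q, hreach, hmem⟩ := reach_complete L hfin tq hsurj t Ctx.hole hc
    exact ⟨q, hmem, hreach⟩
end

section
/- For every n ≥ 1: (i) the tree language L_n over {f(,), a} (terms with at least one root-to-leaf path of length n) is not homogeneous; and (ii) the top-down automaton A′_n defined below is a top-down residual finite tree automaton recognizing L_n. In particular, for each k ≤ n the state language of q_k in A′_n equals L_{n−k}, and the state language of q_* equals T(F). -/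
/-- Top-down residual of the tree language `L` w.r.t. the context `c`:
the set of terms `t` with `c[t] ∈ L`. -/
def tres {F : Type} {arity : F → ℕ} (L : Set (Term F arity)) (c : Ctx F arity) :
    Set (Term F arity) := {t | c.fill t ∈ L}

/-- Top-down finite tree automaton with state type `Q`:
initial states and a set of rules `q(f) → f(q₁,…,qₙ)`. -/
structure TDTA (F : Type) (arity : F → ℕ) (Q : Type) where
  initial : Set Q
  rules : (f : F) → Q → (Fin (arity f) → Q) → Prop

/-- `A.Accepts q t`: the state `q` accepts the term `t`. -/
inductive TDTA.Accepts {F Q : Type} {arity : F → ℕ} (A : TDTA F arity Q) :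
    Q → Term F arity → Prop
  | node {f : F} {q : Q} {qs : Fin (arity f) → Q} {ch : Fin (arity f) → Term F arity} :
      A.rules f q qs → (∀ i, A.Accepts (qs i) (ch i)) → A.Accepts q (.node f ch)

/-- State language `L_q`: the set of terms accepted by the state `q`. -/
def TDTA.stateLang {F Q : Type} {arity : F → ℕ} (A : TDTA F arity Q) (q : Q) :
    Set (Term F arity) := {t | A.Accepts q t}

/-- Language recognized by a top-down tree automaton. -/
def TDTA.lang {F Q : Type} {arity : F → ℕ} (A : TDTA F arity Q) : Set (Term F arity) :=
  {t | ∃ q ∈ A.initial, A.Accepts q t}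

/-- `A.CtxReach q c q'`: running from state `q` on the context `c`, the automaton can
label the hole position with `q'`, accepting every full subterm of `c` hanging off the
path to the hole from its assigned state. -/
inductive TDTA.CtxReach {F Q : Type} {arity : F → ℕ} (A : TDTA F arity Q) :
    Q → Ctx F arity → Q → Prop
  | hole (q : Q) : A.CtxReach q .hole q
  | node {f : F} {q : Q} {qs : Fin (arity f) → Q} {i : Fin (arity f)} {c : Ctx F arity}
      {sib : (j : Fin (arity f)) → j ≠ i → Term F arity} {q' : Q} :
      A.rules f q qs → A.CtxReach (qs i) c q' →
      (∀ j (h : j ≠ i), A.Accepts (qs j) (sib j h)) →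
      A.CtxReach q (.node f i c sib) q'

/-- `Q_c`: the set of states that `A` can reach at the hole position when running
from an initial state on the context `c`. -/
def TDTA.Qc {F Q : Type} {arity : F → ℕ} (A : TDTA F arity Q) (c : Ctx F arity) : Set Q :=
  {q | ∃ qi ∈ A.initial, A.CtxReach qi c q}

/-- Top-down residual finite tree automaton: each state language is a top-down
residual of `L(A)`. -/
def IsTDRFTA {F Q : Type} {arity : F → ℕ} (A : TDTA F arity Q) : Prop :=
  ∀ q : Q, ∃ c : Ctx F arity, A.stateLang q = tres A.lang c
/-- The ranked alphabet `{f(,), a}`. -/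
inductive Symb : Type where
  | f : Symb
  | a : Symb

@[reducible] def ar : Symb → ℕ
  | .f => 2
  | .a => 0

/-- The multiset of lengths (numbers of edges) of all root-to-leaf paths of a term. -/
def leafDepths : Term Symb ar → Multiset ℕ
  | .node .a _ => {0}
  | .node .f ch =>
      ((leafDepths (ch 0)).map (· + 1)) + ((leafDepths (ch 1)).map (· + 1))

/-- `L_n`: terms over `{f(,), a}` with at least one root-to-leaf path of length `n`. -/
def Ln (n : ℕ) : Set (Term Symb ar) := {t | n ∈ leafDepths t}

/-- States of `A_n`: `none` is `q_*`, `some k` is `q_k` for `0 ≤ k ≤ n`. -/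
abbrev Qn (n : ℕ) : Type := Option (Fin (n + 1))

def AnRules (n : ℕ) : (g : Symb) → (Fin (ar g) → Qn n) → Qn n → Prop
  | .a, _, q => q = none ∨ q = some (Fin.last n)
  | .f, qs, q =>
      (qs 0 = none ∧ qs 1 = none ∧ q = none) ∨
      (∃ k, ∃ _h1 : 1 ≤ k, ∃ h2 : k ≤ n,
        ((qs 0 = some ⟨k, Nat.lt_succ_of_le h2⟩ ∧ qs 1 ≠ some ⟨0, Nat.succ_pos n⟩) ∨
         (qs 1 = some ⟨k, Nat.lt_succ_of_le h2⟩ ∧ qs 0 ≠ some ⟨0, Nat.succ_pos n⟩)) ∧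
        (q = some ⟨k - 1, by omega⟩ ∨ q = none))

/-- The automaton `A_n`. -/
def An (n : ℕ) : BUTA Symb ar (Qn n) where
  final := {some ⟨0, Nat.succ_pos n⟩}
  rules := AnRules n

/-- The pair of children of a binary `f` node. -/
def pair (t1 t2 : Term Symb ar) : Fin (ar Symb.f) → Term Symb ar := ![t1, t2]

/-- A tree language over `{f(,), a}` is homogeneous iff
`c[f(t₁,t₂)] ∈ L ∧ c[f(t₁,t′₂)] ∈ L ∧ c[f(t′₁,t₂)] ∈ L → c[f(t′₁,t′₂)] ∈ L`. -/
def Homogeneous (L : Set (Term Symb ar)) : Prop :=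
  ∀ (c : Ctx Symb ar) (t1 t2 t1' t2' : Term Symb ar),
    c.fill (.node .f (pair t1 t2)) ∈ L → c.fill (.node .f (pair t1 t2')) ∈ L →
    c.fill (.node .f (pair t1' t2)) ∈ L → c.fill (.node .f (pair t1' t2')) ∈ L

def A'Rules (n : ℕ) : (g : Symb) → Qn n → (Fin (ar g) → Qn n) → Prop
  | .a, q, _ => q = none ∨ q = some (Fin.last n)
  | .f, q, qs =>
      (q = none ∧ qs 0 = none ∧ qs 1 = none) ∨
      (∃ k, ∃ _h1 : 1 ≤ k, ∃ h2 : k ≤ n,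
        q = some ⟨k - 1, by omega⟩ ∧
        ((qs 0 = some ⟨k, Nat.lt_succ_of_le h2⟩ ∧ qs 1 = none) ∨
         (qs 1 = some ⟨k, Nat.lt_succ_of_le h2⟩ ∧ qs 0 = none)))

/-- The top-down automaton `A′_n`: states `q_*` (= `none`) and `q_0,…,q_n`, initial state
`q_0`, rules `q_*(a) → a`, `q_n(a) → a`, `q_*(f) → f(q_*,q_*)`, and for `1 ≤ k ≤ n`
`q_{k−1}(f) → f(q_k,q_*)` and `q_{k−1}(f) → f(q_*,q_k)`. -/
def A' (n : ℕ) : TDTA Symb ar (Qn n) where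
  initial := {some ⟨0, Nat.succ_pos n⟩}
  rules := A'Rules n


/-! ### Auxiliary lemmas -/

def perfect : ℕ → Term Symb ar
  | 0 => .node .a Fin.elim0
  | m + 1 => .node .f (pair (perfect m) (perfect m))

lemma ld_a (ch : Fin (ar .a) → Term Symb ar) : leafDepths (.node .a ch) = {0} := rfl

lemma ld_f (ch : Fin (ar .f) → Term Symb ar) :
    leafDepths (.node .f ch) =
      ((leafDepths (ch 0)).map (· + 1)) + ((leafDepths (ch 1)).map (· + 1)) := rfl

lemma pair0 (t1 t2 : Term Symb ar) : pair t1 t2 0 = t1 := rfl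
lemma pair1 (t1 t2 : Term Symb ar) : pair t1 t2 1 = t2 := rfl

lemma mem_ld_perfect (m d : ℕ) : d ∈ leafDepths (perfect m) ↔ d = m := by
  induction m generalizing d with
  | zero => simp [perfect, ld_a]
  | succ m ih =>
    simp only [perfect, ld_f, pair0, pair1, Multiset.mem_add, Multiset.mem_map, ih]
    constructor
    · rintro (⟨b, rfl, rfl⟩ | ⟨b, rfl, rfl⟩) <;> rfl
    · rintro rfl; exact Or.inl ⟨m, rfl, rfl⟩

lemma accepts_none (n : ℕ) : ∀ t, (A' n).Accepts none t := by
  intro t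
  induction t with
  | node g ch ih =>
    cases g with
    | a => exact .node (qs := fun _ => none) (Or.inl rfl) (fun i => i.elim0)
    | f => exact .node (qs := fun _ => none) (Or.inl ⟨rfl, rfl, rfl⟩) (fun i => ih i)

lemma accepts_mem (n : ℕ) {q : Qn n} {t : Term Symb ar} (hq : (A' n).Accepts q t) :
    ∀ k (hk : k < n + 1), q = some ⟨k, hk⟩ → n - k ∈ leafDepths t := by
  induction hq with
  | @node g q qs ch hr hch ih =>
    intro k hk hqe
    cases g with
    | a =>
      rcases hr with h | h
      · rw [hqe] at h; cases h
      · subst hqe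
        have hkn : k = n := by
          have h2 := Option.some.inj h
          simpa [Fin.ext_iff, Fin.last] using congrArg Fin.val h2
        subst hkn
        simp [ld_a]
    | f =>
      rcases hr with ⟨h, _, _⟩ | ⟨m, h1, h2, hq', hcs⟩
      · rw [hqe] at h; cases h
      · subst hqe
        have hk' : k = m - 1 := by
          have h3 := Option.some.inj hq'
          simpa [Fin.ext_iff] using congrArg Fin.val h3
        rw [ld_f]
        rcases hcs with ⟨h0, _⟩ | ⟨h0, _⟩
        · have hm := ih 0 m (by omega) h0
          exact Multiset.mem_add.2 (Or.inl (Multiset.mem_map.2 ⟨n - m, hm, by omega⟩))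
        · have hm := ih 1 m (by omega) h0
          exact Multiset.mem_add.2 (Or.inr (Multiset.mem_map.2 ⟨n - m, hm, by omega⟩))

lemma mem_accepts (n : ℕ) : ∀ (t : Term Symb ar) k (hk : k < n + 1),
    n - k ∈ leafDepths t → (A' n).Accepts (some ⟨k, hk⟩) t := by
  intro t
  induction t with
  | node g ch ih =>
    intro k hk hm
    cases g with
    | a =>
      rw [ld_a] at hm
      have hkn : k = n := by simp at hm; omega
      subst hkn
      exact .node (qs := fun _ => none) (Or.inr rfl) (fun i => i.elim0)
    | f =>
      rw [ld_f] at hm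
      rcases Multiset.mem_add.1 hm with h | h
      · obtain ⟨d, hd, hd1⟩ := Multiset.mem_map.1 h
        have hkn : k + 1 ≤ n := by omega
        have hd' : d = n - (k + 1) := by omega
        subst hd'
        have h10 : (1 : Fin (ar Symb.f)) ≠ 0 := by decide
        refine .node (qs := fun j => if j = 0 then some ⟨k + 1, by omega⟩ else none)
          (Or.inr ⟨k + 1, by omega, by omega, ?_, Or.inl ⟨by simp, by simp [h10]⟩⟩) ?_
        · exact congrArg some (Fin.ext (by simp))
        · intro i
          fin_cases i
          · simpa using ih 0 (k + 1) (by omega) hd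
          · simpa [h10] using accepts_none n (ch 1)
      · obtain ⟨d, hd, hd1⟩ := Multiset.mem_map.1 h
        have hkn : k + 1 ≤ n := by omega
        have hd' : d = n - (k + 1) := by omega
        subst hd'
        have h10 : (1 : Fin (ar Symb.f)) ≠ 0 := by decide
        refine .node (qs := fun j => if j = 1 then some ⟨k + 1, by omega⟩ else none)
          (Or.inr ⟨k + 1, by omega, by omega, ?_, Or.inr ⟨by simp, by simp [h10.symm]⟩⟩) ?_
        · exact congrArg some (Fin.ext (by simp))
        · intro i
          fin_cases i
          · simpa [h10.symm] using accepts_none n (ch 0)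
          · simpa using ih 1 (k + 1) (by omega) hd

lemma stateLang_some (n k : ℕ) (hk : k ≤ n) :
    (A' n).stateLang (some ⟨k, Nat.lt_succ_of_le hk⟩) = Ln (n - k) := by
  ext t
  exact ⟨fun h => accepts_mem n h k _ rfl, fun h => mem_accepts n t k _ h⟩

lemma stateLang_none (n : ℕ) : (A' n).stateLang none = Set.univ :=
  Set.eq_univ_of_forall fun t => accepts_none n t

lemma lang_eq (n : ℕ) : (A' n).lang = Ln n := by
  have h := stateLang_some n 0 (Nat.zero_le n)
  rw [Nat.sub_zero] at h
  ext t
  constructor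
  · rintro ⟨q, hq, ha⟩
    have hq' : q = some ⟨0, Nat.succ_pos n⟩ := hq
    subst hq'
    have ht : t ∈ (A' n).stateLang (some ⟨0, Nat.succ_pos n⟩) := ha
    rwa [h] at ht
  · intro ht
    refine ⟨some ⟨0, Nat.succ_pos n⟩, rfl, ?_⟩
    have ht' : t ∈ Ln n := ht
    rw [← h] at ht'
    exact ht'

def ctxK (n : ℕ) : ℕ → Ctx Symb ar
  | 0 => .hole
  | k + 1 => .node .f 0 (ctxK n k) (fun _ _ => perfect n)

lemma ld_fill (n k : ℕ) (t : Term Symb ar) : ∀ m : ℕ,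
    (m ∈ leafDepths ((ctxK n k).fill t) ↔
      (k ≤ m ∧ m - k ∈ leafDepths t) ∨ ∃ j, j < k ∧ m = n + j + 1) := by
  induction k with
  | zero => intro m; simp [ctxK, Ctx.fill]
  | succ k ih =>
    intro m
    have h10 : (1 : Fin (ar Symb.f)) ≠ 0 := by decide
    have hfill : (ctxK n (k + 1)).fill t =
        .node .f (fun j => if h : j = 0 then (ctxK n k).fill t else perfect n) := rfl
    rw [hfill, ld_f, dif_pos (rfl : (0 : Fin (ar Symb.f)) = 0), dif_neg h10]
    simp only [Multiset.mem_add, Multiset.mem_map, ih, mem_ld_perfect]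
    constructor
    · rintro (⟨b, (⟨hb1, hb2⟩ | ⟨j, hj, rfl⟩), rfl⟩ | ⟨b, rfl, rfl⟩)
      · exact Or.inl ⟨by omega, by rwa [show b + 1 - (k + 1) = b - k by omega]⟩
      · exact Or.inr ⟨j + 1, by omega, by omega⟩
      · exact Or.inr ⟨0, by omega, by omega⟩
    · rintro (⟨h1, h2⟩ | ⟨j, hj, rfl⟩)
      · exact Or.inl ⟨m - 1, Or.inl ⟨by omega,
          by rwa [show m - 1 - k = m - (k + 1) by omega]⟩, by omega⟩
      · rcases Nat.eq_zero_or_pos j with rfl | hj'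
        · exact Or.inr ⟨n, rfl, by omega⟩
        · exact Or.inl ⟨n + j, Or.inr ⟨j - 1, by omega, by omega⟩, by omega⟩

lemma tres_ctxK (n k : ℕ) (hk : k ≤ n) : tres (Ln n) (ctxK n k) = Ln (n - k) := by
  ext t
  show (ctxK n k).fill t ∈ Ln n ↔ n - k ∈ leafDepths t
  show n ∈ leafDepths ((ctxK n k).fill t) ↔ _
  rw [ld_fill]
  constructor
  · rintro (⟨_, h⟩ | ⟨j, hj, h⟩)
    · exact h
    · omega
  · intro h; exact Or.inl ⟨hk, h⟩

lemma tres_c0 (n : ℕ) (hn : 1 ≤ n) :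
    tres (Ln n) (.node .f 0 .hole (fun _ _ => perfect (n - 1))) = Set.univ := by
  apply Set.eq_univ_of_forall
  intro t
  have h10 : (1 : Fin (ar Symb.f)) ≠ 0 := by decide
  show n ∈ leafDepths (Ctx.fill _ t)
  have hfill : (Ctx.node Symb.f 0 Ctx.hole (fun _ _ => perfect (n - 1))).fill t =
      .node .f (fun j => if h : j = 0 then t else perfect (n - 1)) := rfl
  rw [hfill, ld_f, dif_pos (rfl : (0 : Fin (ar Symb.f)) = 0), dif_neg h10]
  exact Multiset.mem_add.2 (Or.inr (Multiset.mem_map.2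
    ⟨n - 1, (mem_ld_perfect _ _).2 rfl, by omega⟩))

lemma not_homog (n : ℕ) (hn : 1 ≤ n) : ¬ Homogeneous (Ln n) := by
  intro h
  have key : ∀ a b : ℕ, (Term.node .f (pair (perfect a) (perfect b)) ∈ Ln n) ↔
      (n = a + 1 ∨ n = b + 1) := by
    intro a b
    show n ∈ leafDepths _ ↔ _
    rw [ld_f, pair0, pair1]
    simp only [Multiset.mem_add, Multiset.mem_map, mem_ld_perfect]
    constructor
    · rintro (⟨d, rfl, rfl⟩ | ⟨d, rfl, rfl⟩)
      · exact Or.inl rfl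
      · exact Or.inr rfl
    · rintro (rfl | rfl)
      · exact Or.inl ⟨a, rfl, rfl⟩
      · exact Or.inr ⟨b, rfl, rfl⟩
  have hcon := h .hole (perfect (n - 1)) (perfect (n - 1)) (perfect n) (perfect n)
    ((key _ _).2 (Or.inl (by omega))) ((key _ _).2 (Or.inl (by omega)))
    ((key _ _).2 (Or.inr (by omega)))
  have := (key n n).1 hcon
  omega

/-- For every `n ≥ 1`: `L_n` is not homogeneous, and `A′_n` is a ↓-RFTA
recognizing `L_n`; in particular the state language of `q_k` is `L_{n−k}` and the state
language of `q_*` is the set of all terms. -/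
theorem A'_isTDRFTA_recognizes_Ln (n : ℕ) (hn : 1 ≤ n) :
    ¬ Homogeneous (Ln n) ∧
    (A' n).lang = Ln n ∧
    IsTDRFTA (A' n) ∧
    (∀ k : ℕ, ∀ hk : k ≤ n,
      (A' n).stateLang (some ⟨k, Nat.lt_succ_of_le hk⟩) = Ln (n - k)) ∧
    (A' n).stateLang none = Set.univ := by
  refine ⟨not_homog n hn, lang_eq n, ?_, fun k hk => stateLang_some n k hk, stateLang_none n⟩
  intro q
  rw [lang_eq]
  match q with
  | none =>
    exact ⟨.node .f 0 .hole (fun _ _ => perfect (n - 1)),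
      (stateLang_none n).trans (tres_c0 n hn).symm⟩
  | some ⟨k, hk⟩ =>
    have hk' : k ≤ n := by omega
    refine ⟨ctxK n k, ?_⟩
    have h1 : (A' n).stateLang (some ⟨k, hk⟩) = Ln (n - k) := stateLang_some n k hk'
    rw [h1, tres_ctxK n k hk']
end

section
/- Let L be a tree language recognized by some top-down residual finite tree automaton, and let A_can be the canonical top-down automaton of L defined below. Then: (i) for every state q of A_can, the state language of q in A_can equals its associated prime residual, L_q = c_q⁻¹L; (ii) L(A_can) = L, so A_can is a ↓-RFTA recognizing L; and (iii) every ↓-RFTA recognizing L has at least as many states as the number of prime top-down residuals of L, so A_can is a smallest ↓-RFTA recognizing L, unique up to renaming of states. -/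
/-- A top-down residual is composite iff it is the union of the top-down residuals
of `L` that it strictly contains. -/
def IsCompositeTRes {F : Type} {arity : F → ℕ} (L : Set (Term F arity))
    (c : Ctx F arity) : Prop :=
  tres L c = ⋃ c' ∈ {c' : Ctx F arity | tres L c' ⊂ tres L c}, tres L c'

/-- A top-down residual is prime iff it is not composite. -/
def IsPrimeTRes {F : Type} {arity : F → ℕ} (L : Set (Term F arity))
    (c : Ctx F arity) : Prop := ¬ IsCompositeTRes L c

/-- The canonical top-down automaton of `L`, given a family `cq` of representative contexts
(one per prime top-down residual of `L`): initial states are the `q` with `c_q⁻¹L ⊆ L`, and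
the rules are the `q(f) → f(q₁,…,qₙ)` such that `c_q[f(t₁,…,tₙ)] ∈ L` whenever
`tᵢ ∈ c_{qᵢ}⁻¹L` for all `i`. -/
def canonTD {F : Type} {arity : F → ℕ} (L : Set (Term F arity)) {Q : Type}
    (cq : Q → Ctx F arity) : TDTA F arity Q where
  initial := {q | tres L (cq q) ⊆ L}
  rules f q qs := ∀ ts : Fin (arity f) → Term F arity,
    (∀ i, ts i ∈ tres L (cq (qs i))) → Ctx.fill (cq q) (.node f ts) ∈ L

/-!
For any automaton `A`, the residual `c⁻¹L(A)` is the union of the state languages `L_p` over the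
states `p` that `A` can reach at the hole of `c`. Hence a ↓-RFTA has finitely many residuals,
every prime residual is a single state language (otherwise it would be the union of strictly
smaller residuals), and every term of a residual lies in a prime residual contained in it.

The rules of `A_can` are designed so that `q` only accepts terms of `c_q⁻¹L`. Conversely, take
`t = f(t₁,…,tₙ) ∈ c_q⁻¹L` and a run of a ↓-RFTA recognizing `L` from a state `p` reachable at the
hole of `c_q`, using the rule `p(f) → f(p₁,…,pₙ)`: squeezing a prime residual `c_{qᵢ}⁻¹L` between
`tᵢ` and `L_{pᵢ}` yields a rule `q(f) → f(q₁,…,qₙ)` of `A_can`, and induction on `t` concludes.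
Minimality holds because each prime residual must be the state language of some state of any
↓-RFTA for `L`, and uniqueness because `A_can` only depends on the set of prime residuals.
-/

open Function Set

section Automaton

variable {F Q : Type} {arity : F → ℕ} (A : TDTA F arity Q)

theorem TDTA.accepts_fill_iff (c : Ctx F arity) (q : Q) (t : Term F arity) :
    A.Accepts q (c.fill t) ↔ ∃ q', A.CtxReach q c q' ∧ A.Accepts q' t := by
  induction c generalizing q with
  | hole =>
    refine ⟨fun h => ⟨q, .hole q, h⟩, ?_⟩
    rintro ⟨q', ⟨⟩, ht⟩
    exact ht
  | node f i c sib ih =>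
    constructor
    · rintro ⟨hrule, hchildren⟩
      obtain ⟨q', hreach, ht⟩ := (ih _).mp (by simpa using hchildren i)
      exact ⟨q', .node hrule hreach fun j hj => by simpa [hj] using hchildren j, ht⟩
    · rintro ⟨q', hreach, ht⟩
      obtain _ | ⟨hrule, hreach, hsib⟩ := hreach
      refine .node hrule fun j => ?_
      by_cases hj : j = i
      · subst hj
        simpa using (ih _).mpr ⟨q', hreach, ht⟩
      · simpa [hj] using hsib j hj

theorem TDTA.tres_lang_eq_biUnion (c : Ctx F arity) :
    tres A.lang c = ⋃ p ∈ A.Qc c, A.stateLang p := by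
  ext t
  simp only [tres, TDTA.lang, TDTA.Qc, TDTA.stateLang, mem_ofPred_eq, mem_iUnion, exists_prop,
    A.accepts_fill_iff]
  constructor
  · rintro ⟨qi, hqi, p, hreach, ht⟩
    exact ⟨p, ⟨qi, hqi, hreach⟩, ht⟩
  · rintro ⟨p, ⟨qi, hqi, hreach⟩, ht⟩
    exact ⟨qi, hqi, p, hreach, ht⟩

theorem TDTA.stateLang_subset_tres_lang {c : Ctx F arity} {p : Q} (hp : p ∈ A.Qc c) :
    A.stateLang p ⊆ tres A.lang c :=
  A.tres_lang_eq_biUnion c ▸ subset_biUnion_of_mem hp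

theorem TDTA.finite_range_tres_lang [Finite Q] : (range (tres A.lang)).Finite :=
  (finite_range fun s : Set Q => ⋃ p ∈ s, A.stateLang p).subset <| by
    rintro _ ⟨c, rfl⟩
    exact ⟨A.Qc c, (A.tres_lang_eq_biUnion c).symm⟩

variable {A}

theorem IsTDRFTA.exists_stateLang_eq_of_isPrimeTRes (hA : IsTDRFTA A) {c : Ctx F arity}
    (hc : IsPrimeTRes A.lang c) : ∃ p, A.stateLang p = tres A.lang c := by
  by_contra! hne
  refine hc (Subset.antisymm (fun t ht => ?_) (iUnion₂_subset fun _ hc' => hc'.subset))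
  obtain ⟨p, hp, htp⟩ := mem_iUnion₂.mp (A.tres_lang_eq_biUnion c ▸ ht)
  obtain ⟨c', hc'⟩ := hA p
  have hlt : tres A.lang c' ⊂ tres A.lang c :=
    hc' ▸ (A.stateLang_subset_tres_lang hp).ssubset_of_ne (hne p)
  exact mem_biUnion hlt (hc' ▸ htp)

theorem IsTDRFTA.card_le [Fintype Q] (hA : IsTDRFTA A) {P : Type} [Fintype P]
    {cq : P → Ctx F arity} (hprime : ∀ q, IsPrimeTRes A.lang (cq q))
    (hinj : Injective (tres A.lang ∘ cq)) : Fintype.card P ≤ Fintype.card Q := by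
  choose φ hφ using fun q => hA.exists_stateLang_eq_of_isPrimeTRes (hprime q)
  refine Fintype.card_le_of_injective φ fun q₁ q₂ h => hinj ?_
  simp only [comp_apply, ← hφ, h]

end Automaton

section Residuals

variable {F Q : Type} {arity : F → ℕ} {L : Set (Term F arity)}

theorem exists_isPrimeTRes_mem_subset (hfin : (range (tres L)).Finite) {c : Ctx F arity}
    {t : Term F arity} (ht : t ∈ tres L c) :
    ∃ c', IsPrimeTRes L c' ∧ t ∈ tres L c' ∧ tres L c' ⊆ tres L c := by
  obtain ⟨_, hle, ⟨⟨c', rfl⟩, htc'⟩, hmin⟩ :=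
    (hfin.inter_of_left {S | t ∈ S}).exists_le_minimal (a := tres L c) ⟨⟨c, rfl⟩, ht⟩
  refine ⟨c', fun hcomp => ?_, htc', hle⟩
  obtain ⟨c'', hlt, htc''⟩ := mem_iUnion₂.mp (hcomp ▸ htc')
  exact hlt.not_subset (hmin ⟨⟨c'', rfl⟩, htc''⟩ hlt.subset)

theorem exists_tres_mem_subset (hfin : (range (tres L)).Finite) {cq : Q → Ctx F arity}
    (hsurj : ∀ c, IsPrimeTRes L c → ∃ q, tres L (cq q) = tres L c) {c : Ctx F arity}
    {t : Term F arity} (ht : t ∈ tres L c) :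
    ∃ q, t ∈ tres L (cq q) ∧ tres L (cq q) ⊆ tres L c := by
  obtain ⟨c', hprime, htc', hsub⟩ := exists_isPrimeTRes_mem_subset hfin ht
  obtain ⟨q, hq⟩ := hsurj c' hprime
  exact ⟨q, hq ▸ htc', hq ▸ hsub⟩

theorem range_tres_comp_eq {cq : Q → Ctx F arity} (hprime : ∀ q, IsPrimeTRes L (cq q))
    (hsurj : ∀ c, IsPrimeTRes L c → ∃ q, tres L (cq q) = tres L c) :
    range (tres L ∘ cq) = {S | ∃ c, IsPrimeTRes L c ∧ tres L c = S} := by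
  ext S
  constructor
  · rintro ⟨q, rfl⟩
    exact ⟨cq q, hprime q, rfl⟩
  · rintro ⟨c, hc, rfl⟩
    exact hsurj c hc

end Residuals

section Canonical

variable {F Q : Type} {arity : F → ℕ} {L : Set (Term F arity)} {cq : Q → Ctx F arity}

theorem canonTD_stateLang_subset (q : Q) : (canonTD L cq).stateLang q ⊆ tres L (cq q) := by
  intro t ht
  induction ht with
  | node hrule _ ih => exact hrule _ ih

theorem tres_subset_canonTD_stateLang {P : Type} [Finite P] {A : TDTA F arity P}
    (hA : IsTDRFTA A)
    (hsurj : ∀ c, IsPrimeTRes A.lang c → ∃ q, tres A.lang (cq q) = tres A.lang c) (q : Q) :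
    tres A.lang (cq q) ⊆ (canonTD A.lang cq).stateLang q := by
  intro t ht
  induction t generalizing q with
  | node f ts ih =>
    obtain ⟨p, hp, hpt⟩ := mem_iUnion₂.mp (A.tres_lang_eq_biUnion _ ▸ ht)
    obtain @⟨_, _, ps, _, hrule, hchildren⟩ := hpt
    have hsqueeze (i) : ∃ qi, ts i ∈ tres A.lang (cq qi) ∧
        tres A.lang (cq qi) ⊆ A.stateLang (ps i) := by
      obtain ⟨ci, hci⟩ := hA (ps i)
      exact hci ▸ exists_tres_mem_subset A.finite_range_tres_lang hsurj (hci ▸ hchildren i)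
    choose qs hmem hsub using hsqueeze
    have hcanon : (canonTD A.lang cq).rules f q qs := fun us hus =>
      A.stateLang_subset_tres_lang hp (.node hrule fun i => hsub i (hus i))
    exact .node hcanon fun i => ih i (qs i) (hmem i)

theorem canonTD_lang_eq (hfin : (range (tres L)).Finite)
    (hsurj : ∀ c, IsPrimeTRes L c → ∃ q, tres L (cq q) = tres L c)
    (hstate : ∀ q, (canonTD L cq).stateLang q = tres L (cq q)) : (canonTD L cq).lang = L := by
  refine Subset.antisymm (fun t ⟨q, hq, ht⟩ => hq (canonTD_stateLang_subset q ht))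
    fun t ht => ?_
  obtain ⟨q, htq, hsub⟩ := exists_tres_mem_subset hfin hsurj (c := .hole) ht
  exact ⟨q, hsub, (hstate q).superset htq⟩

theorem canonTD_initial_iff_of_tres_eq {Q' : Type} {cq' : Q' → Ctx F arity} {e : Q → Q'}
    (he : ∀ q, tres L (cq' (e q)) = tres L (cq q)) (q : Q) :
    q ∈ (canonTD L cq).initial ↔ e q ∈ (canonTD L cq').initial := by
  simp only [canonTD, mem_ofPred_eq, he]

theorem canonTD_rules_iff_of_tres_eq {Q' : Type} {cq' : Q' → Ctx F arity} {e : Q → Q'}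
    (he : ∀ q, tres L (cq' (e q)) = tres L (cq q)) (f : F) (q : Q) (qs : Fin (arity f) → Q) :
    (canonTD L cq).rules f q qs ↔ (canonTD L cq').rules f (e q) (e ∘ qs) := by
  change (∀ ts, (∀ i, ts i ∈ tres L (cq (qs i))) → Term.node f ts ∈ tres L (cq q)) ↔
    (∀ ts, (∀ i, ts i ∈ tres L (cq' (e (qs i)))) → Term.node f ts ∈ tres L (cq' (e q)))
  simp only [he]

end Canonical

theorem exists_equiv_comp_eq_of_range_eq {α β γ : Type*} {f : α → γ} {g : β → γ}
    (hf : Injective f) (hg : Injective g) (h : range f = range g) :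
    ∃ e : α ≃ β, ∀ a, g (e a) = f a :=
  ⟨(Equiv.ofInjective f hf).trans ((Equiv.setCongr h).trans (Equiv.ofInjective g hg).symm),
    fun _ => Equiv.apply_ofInjective_symm hg _⟩

theorem canonTD_spec_general {F Q : Type} [Fintype Q] {arity : F → ℕ}
    (L : Set (Term F arity))
    (hrec : ∃ (Q' : Type) (_ : Fintype Q') (A : TDTA F arity Q'), IsTDRFTA A ∧ A.lang = L)
    (cq : Q → Ctx F arity)
    (hprime : ∀ q, IsPrimeTRes L (cq q))
    (hinj : ∀ q q', tres L (cq q) = tres L (cq q') → q = q')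
    (hsurj : ∀ c : Ctx F arity, IsPrimeTRes L c → ∃ q, tres L (cq q) = tres L c) :
    (∀ q : Q, (canonTD L cq).stateLang q = tres L (cq q)) ∧
    (canonTD L cq).lang = L ∧
    IsTDRFTA (canonTD L cq) ∧
    (∀ (Q' : Type) [Fintype Q'], ∀ A' : TDTA F arity Q',
      IsTDRFTA A' → A'.lang = L → Fintype.card Q ≤ Fintype.card Q') ∧
    (∀ (Q' : Type) (cq' : Q' → Ctx F arity),
      (∀ q', IsPrimeTRes L (cq' q')) →
      (∀ q1 q2, tres L (cq' q1) = tres L (cq' q2) → q1 = q2) →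
      (∀ c : Ctx F arity, IsPrimeTRes L c → ∃ q', tres L (cq' q') = tres L c) →
      ∃ e : Q ≃ Q',
        (∀ q, q ∈ (canonTD L cq).initial ↔ e q ∈ (canonTD L cq').initial) ∧
        (∀ (f : F) (q : Q) (qs : Fin (arity f) → Q),
          (canonTD L cq).rules f q qs ↔ (canonTD L cq').rules f (e q) (e ∘ qs))) := by
  obtain ⟨P, _, A, hA, rfl⟩ := hrec
  have hstate (q : Q) : (canonTD A.lang cq).stateLang q = tres A.lang (cq q) :=
    (canonTD_stateLang_subset q).antisymm (tres_subset_canonTD_stateLang hA hsurj q)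
  have hlang := canonTD_lang_eq A.finite_range_tres_lang hsurj hstate
  refine ⟨hstate, hlang, fun q => ⟨cq q, by rw [hstate, hlang]⟩, ?_, ?_⟩
  · intro Q' _ A' hA' hlang'
    exact hA'.card_le (hlang' ▸ hprime) (hlang' ▸ fun q q' h => hinj q q' h)
  · intro Q' cq' hprime' hinj' hsurj'
    obtain ⟨e, he⟩ := exists_equiv_comp_eq_of_range_eq (f := tres A.lang ∘ cq)
      (g := tres A.lang ∘ cq') (fun q q' h => hinj q q' h) (fun q q' h => hinj' q q' h)
      (by rw [range_tres_comp_eq hprime hsurj, range_tres_comp_eq hprime' hsurj'])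
    exact ⟨e, canonTD_initial_iff_of_tres_eq he, canonTD_rules_iff_of_tres_eq he⟩

/-- For a tree language `L` recognized by some ↓-RFTA, the canonical
top-down automaton `A_can` satisfies: (i) `L_q = c_q⁻¹L` for every state `q`;
(ii) `L(A_can) = L` and `A_can` is a ↓-RFTA; (iii) every ↓-RFTA recognizing `L` has at
least as many states as the number of prime top-down residuals of `L` (so `A_can` is a
smallest ↓-RFTA recognizing `L`), and `A_can` is unique up to a renaming of its states. -/
theorem canonTD_spec {F Q : Type} [Fintype F] [Fintype Q] {arity : F → ℕ}
    (_hconst : ∃ a : F, arity a = 0) (L : Set (Term F arity))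
    (hrec : ∃ (Q' : Type) (_ : Fintype Q') (A : TDTA F arity Q'), IsTDRFTA A ∧ A.lang = L)
    (cq : Q → Ctx F arity)
    (hprime : ∀ q, IsPrimeTRes L (cq q))
    (hinj : ∀ q q', tres L (cq q) = tres L (cq q') → q = q')
    (hsurj : ∀ c : Ctx F arity, IsPrimeTRes L c → ∃ q, tres L (cq q) = tres L c) :
    (∀ q : Q, (canonTD L cq).stateLang q = tres L (cq q)) ∧
    (canonTD L cq).lang = L ∧
    IsTDRFTA (canonTD L cq) ∧
    (∀ (Q' : Type) [Fintype Q'], ∀ A' : TDTA F arity Q',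
      IsTDRFTA A' → A'.lang = L → Fintype.card Q ≤ Fintype.card Q') ∧
    (∀ (Q' : Type) (cq' : Q' → Ctx F arity),
      (∀ q', IsPrimeTRes L (cq' q')) →
      (∀ q1 q2, tres L (cq' q1) = tres L (cq' q2) → q1 = q2) →
      (∀ c : Ctx F arity, IsPrimeTRes L c → ∃ q', tres L (cq' q') = tres L c) →
      ∃ e : Q ≃ Q',
        (∀ q, q ∈ (canonTD L cq).initial ↔ e q ∈ (canonTD L cq').initial) ∧
        (∀ (f : F) (q : Q) (qs : Fin (arity f) → Q),
          (canonTD L cq).rules f q qs ↔ (canonTD L cq').rules f (e q) (e ∘ qs))) :=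
  canonTD_spec_general L hrec cq hprime hinj hsurj
end
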